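/- arXiv:1804.04305 — 2 statements merged into one kernel-verified Lean document; each statement's English description precedes it below -/
import Mathlib

section
/- Let |ξ⟩ = ∑_{m≥0} |m⟩/(q;q)_m and ⟨ξ| = ∑_{m≥0} ⟨m|/(q;q)_m be boundary vectors in the q-boson Fock space with inner product ⟨m|m'⟩ = (q²;q²)_m δ_{m,m'}. Then for |q| < 1, |z| < |q|^{-m}, and j, m ≥ 0: ⟨ξ| z^h (a⁺)^j k^m |ξ⟩ = q^{m/2} (-q;q)_j z^j (-q^{j+m+1}z;q)_∞ / (q^m z;q)_∞, and ⟨ξ| z^h (a⁻)^j k^m |ξ⟩ = q^{m/2} (-q;q)_j q^{mj} (-q^{j+m+1}z;q)_∞ / (q^m z;q)_∞. -/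
/-- The operator on the Fock space `(ℕ →₀ ℂ)` sending `|m⟩` to `c m • |g m⟩`. -/
noncomputable def fockOp (c : ℕ → ℂ) (g : ℕ → ℕ) : Module.End ℂ (ℕ →₀ ℂ) :=
  Finsupp.lsum ℂ fun m => c m • Finsupp.lsingle (g m)

/-- `(a; p)_n = ∏_{k=1}^n (1 - a p^{k-1})`. -/
noncomputable def qPoch (a p : ℂ) (n : ℕ) : ℂ := ∏ k ∈ Finset.range n, (1 - a * p ^ k)

/-- `(a; p)_∞ = ∏_{k ≥ 1} (1 - a p^{k-1})`. -/
noncomputable def qPochInf (a p : ℂ) : ℂ := ∏' k : ℕ, (1 - a * p ^ k)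

/-! Term by term in `b`, the pairing is a constant times `(-q^{j+1};q)_b/(q;q)_b (q^m z)^b`
(for `a⁻` after substituting `b = n + j`), because `(q²;q²)_n = (q;q)_n (-q;q)_n`. Summing uses
the q-binomial theorem `∑ (a;q)_n/(q;q)_n wⁿ = (aw;q)_∞/(w;q)_∞`: the series `S(w)` satisfies
`(1 - w) S(w) = (1 - aw) S(qw)`, so `(w;q)_N S(w) = (aw;q)_N S(q^N w)`, and `S(q^N w) → 1` by
dominated convergence. -/

open Filter Topology Finset

theorem qPoch_zero (a p : ℂ) : qPoch a p 0 = 1 := prod_range_zero _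

theorem qPoch_succ (a p : ℂ) (n : ℕ) : qPoch a p (n + 1) = qPoch a p n * (1 - a * p ^ n) :=
  prod_range_succ _ n

theorem qPoch_add (a p : ℂ) (i n : ℕ) :
    qPoch a p (i + n) = qPoch a p i * qPoch (a * p ^ i) p n := by
  rw [qPoch, prod_range_add]
  exact congrArg _ (prod_congr rfl fun k _ => by ring)

theorem qPoch_sq_sq (u p : ℂ) (n : ℕ) :
    qPoch (u ^ 2) (p ^ 2) n = qPoch u p n * qPoch (-u) p n := by
  rw [qPoch, qPoch, qPoch, ← prod_mul_distrib]
  exact prod_congr rfl fun k _ => by ring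

theorem one_sub_mul_pow_ne_zero {u p : ℂ} (hp : ‖p‖ ≤ 1) (hu : ‖u‖ < 1) (k : ℕ) :
    1 - u * p ^ k ≠ 0 := by
  have hlt : ‖u * p ^ k‖ < 1 := by
    rw [norm_mul, norm_pow]
    exact (mul_le_of_le_one_right (norm_nonneg u) (pow_le_one₀ (norm_nonneg p) hp)).trans_lt hu
  intro h
  rw [← sub_eq_zero.mp h, norm_one] at hlt
  exact hlt.false

theorem qPoch_ne_zero {u p : ℂ} (hp : ‖p‖ ≤ 1) (hu : ‖u‖ < 1) (n : ℕ) : qPoch u p n ≠ 0 :=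
  prod_ne_zero_iff.mpr fun k _ => one_sub_mul_pow_ne_zero hp hu k

theorem qPoch_sq_div_qPoch {q : ℂ} (hq : ‖q‖ < 1) (n : ℕ) :
    qPoch (q ^ 2) (q ^ 2) n / qPoch q q n = qPoch (-q) q n := by
  rw [qPoch_sq_sq, mul_div_cancel_left₀ _ (qPoch_ne_zero hq.le hq n)]

theorem summable_norm_mul_pow (u : ℂ) {q : ℂ} (hq : ‖q‖ < 1) :
    Summable fun k : ℕ => ‖u * q ^ k‖ := by
  simpa only [norm_mul, norm_pow] using
    (summable_geometric_of_lt_one (norm_nonneg q) hq).mul_left ‖u‖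

theorem hasProd_qPochInf (u : ℂ) {q : ℂ} (hq : ‖q‖ < 1) :
    HasProd (fun k : ℕ => 1 - u * q ^ k) (qPochInf u q) := by
  have h := multipliable_one_add_of_summable (f := fun k => -(u * q ^ k))
    (by simpa only [norm_neg] using summable_norm_mul_pow u hq)
  simp only [← sub_eq_add_neg] at h
  exact h.hasProd

theorem tendsto_qPoch_qPochInf (u : ℂ) {q : ℂ} (hq : ‖q‖ < 1) :
    Tendsto (qPoch u q) atTop (𝓝 (qPochInf u q)) :=
  (hasProd_qPochInf u hq).tendsto_prod_nat

theorem qPochInf_ne_zero {u q : ℂ} (hq : ‖q‖ < 1) (hu : ‖u‖ < 1) : qPochInf u q ≠ 0 := by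
  have h := tprod_one_add_ne_zero_of_summable (f := fun k => -(u * q ^ k))
    (fun k => by simpa [← sub_eq_add_neg] using one_sub_mul_pow_ne_zero hq.le hu k)
    (by simpa only [norm_neg] using summable_norm_mul_pow u hq)
  rw [qPochInf]
  simpa only [← sub_eq_add_neg] using h

section QBinomial

noncomputable def qBinomialSeries (a q w : ℂ) : ℂ := ∑' n : ℕ, qPoch a q n / qPoch q q n * w ^ n

variable (a : ℂ) {q w : ℂ}

theorem qPoch_div_qPoch_succ (n : ℕ) :
    qPoch a q (n + 1) / qPoch q q (n + 1) =
      qPoch a q n / qPoch q q n * ((1 - a * q ^ n) / (1 - q * q ^ n)) := by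
  rw [qPoch_succ, qPoch_succ, mul_div_mul_comm]

theorem summable_norm_qBinomial_term (hq : ‖q‖ < 1) (hw : ‖w‖ < 1) :
    Summable fun n : ℕ => ‖qPoch a q n / qPoch q q n‖ * ‖w‖ ^ n := by
  have hratio : Tendsto (fun n : ℕ => ‖(1 - a * q ^ n) / (1 - q * q ^ n)‖ * ‖w‖) atTop
      (𝓝 ‖w‖) := by
    have hqn := tendsto_pow_atTop_nhds_zero_of_norm_lt_one hq
    have h := ((hqn.const_mul a).const_sub 1).div ((hqn.const_mul q).const_sub 1) (by simp)
    simpa using h.norm.mul_const ‖w‖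
  refine summable_of_ratio_norm_eventually_le (r := (1 + ‖w‖) / 2) (by linarith) ?_
  filter_upwards [hratio.eventually (gt_mem_nhds (show ‖w‖ < (1 + ‖w‖) / 2 by linarith))]
    with n hn
  rw [Real.norm_of_nonneg (by positivity), Real.norm_of_nonneg (by positivity),
    qPoch_div_qPoch_succ, norm_mul, pow_succ]
  calc _ = ‖(1 - a * q ^ n) / (1 - q * q ^ n)‖ * ‖w‖ * (‖qPoch a q n / qPoch q q n‖ * ‖w‖ ^ n) := by
        ring
    _ ≤ (1 + ‖w‖) / 2 * (‖qPoch a q n / qPoch q q n‖ * ‖w‖ ^ n) := by gcongr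

theorem summable_qBinomial_term (hq : ‖q‖ < 1) (hw : ‖w‖ < 1) :
    Summable fun n : ℕ => qPoch a q n / qPoch q q n * w ^ n :=
  .of_norm (by simpa only [norm_mul, norm_pow] using summable_norm_qBinomial_term a hq hw)

theorem one_sub_mul_qBinomialSeries (hq : ‖q‖ < 1) (hw : ‖w‖ < 1) :
    (1 - w) * qBinomialSeries a q w = (1 - a * w) * qBinomialSeries a q (q * w) := by
  have hqw : ‖q * w‖ < 1 := by
    rw [norm_mul]; exact (mul_le_of_le_one_left (norm_nonneg w) hq.le).trans_lt hw
  have hS := summable_qBinomial_term a hq hw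
  have hT := summable_qBinomial_term a hq hqw
  have hstep : ∀ n : ℕ,
      qPoch a q (n + 1) / qPoch q q (n + 1) * w ^ (n + 1) -
          qPoch a q (n + 1) / qPoch q q (n + 1) * (q * w) ^ (n + 1) =
        w * (qPoch a q n / qPoch q q n * w ^ n) -
          a * w * (qPoch a q n / qPoch q q n * (q * w) ^ n) := by
    intro n
    have hne := one_sub_mul_pow_ne_zero hq.le hq n
    rw [qPoch_div_qPoch_succ]
    rw [div_eq_mul_inv (1 - a * q ^ n)]
    linear_combination (qPoch a q n / qPoch q q n * (1 - a * q ^ n) * w ^ (n + 1)) *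
      inv_mul_cancel₀ hne
  have hdiff : qBinomialSeries a q w - qBinomialSeries a q (q * w) =
      w * qBinomialSeries a q w - a * w * qBinomialSeries a q (q * w) := by
    rw [qBinomialSeries, qBinomialSeries, ← hS.tsum_sub hT, (hS.sub hT).tsum_eq_zero_add]
    simp only [pow_zero, mul_one, sub_self, zero_add, hstep]
    rw [(hS.mul_left w).tsum_sub (hT.mul_left (a * w)), tsum_mul_left, tsum_mul_left]
  linear_combination hdiff

theorem qPoch_mul_qBinomialSeries (hq : ‖q‖ < 1) (hw : ‖w‖ < 1) (N : ℕ) :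
    qPoch w q N * qBinomialSeries a q w = qPoch (a * w) q N * qBinomialSeries a q (q ^ N * w) := by
  induction N with
  | zero => simp [qPoch_zero]
  | succ N ih =>
    have hqNw : ‖q ^ N * w‖ < 1 := by
      rw [norm_mul, norm_pow]
      exact (mul_le_of_le_one_left (norm_nonneg w) (pow_le_one₀ (norm_nonneg q) hq.le)).trans_lt hw
    have hfe := one_sub_mul_qBinomialSeries a hq hqNw
    rw [show q * (q ^ N * w) = q ^ (N + 1) * w by ring] at hfe
    rw [qPoch_succ, qPoch_succ]
    linear_combination (1 - w * q ^ N) * ih + qPoch (a * w) q N * hfe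

theorem tendsto_qBinomialSeries_pow_mul (hq : ‖q‖ < 1) (hw : ‖w‖ < 1) :
    Tendsto (fun N : ℕ => qBinomialSeries a q (q ^ N * w)) atTop (𝓝 1) := by
  have hzero : ∑' n : ℕ, qPoch a q n / qPoch q q n * (0 : ℂ) ^ n = 1 := by
    rw [tsum_eq_single 0 fun n hn => by simp [hn]]
    simp [qPoch_zero]
  rw [← hzero]
  refine tendsto_tsum_of_dominated_convergence (summable_norm_qBinomial_term a hq hw)
    (fun n => ?_) (.of_forall fun N n => ?_)
  · have h : Tendsto (fun N : ℕ => q ^ N * w) atTop (𝓝 0) := by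
      simpa using (tendsto_pow_atTop_nhds_zero_of_norm_lt_one hq).mul_const w
    exact (h.pow n).const_mul _
  · rw [norm_mul, norm_pow, norm_mul, norm_pow]
    gcongr
    exact mul_le_of_le_one_left (norm_nonneg w) (pow_le_one₀ (norm_nonneg q) hq.le)

theorem qBinomialSeries_eq_div_qPochInf (hq : ‖q‖ < 1) (hw : ‖w‖ < 1) :
    qBinomialSeries a q w = qPochInf (a * w) q / qPochInf w q := by
  have hL := ((tendsto_qPoch_qPochInf w hq).mul_const (qBinomialSeries a q w)).congr
    (qPoch_mul_qBinomialSeries a hq hw)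
  have hR := (tendsto_qPoch_qPochInf (a * w) hq).mul (tendsto_qBinomialSeries_pow_mul a hq hw)
  rw [eq_div_iff (qPochInf_ne_zero hq hw), mul_comm, tendsto_nhds_unique hL hR, mul_one]

end QBinomial

section FockSpace

open Finsupp (single)

theorem fockOp_single (c : ℕ → ℂ) (g : ℕ → ℕ) (b : ℕ) (x : ℂ) :
    fockOp c g (single b x) = single (g b) (c b * x) := by
  simp [fockOp, Finsupp.smul_single, smul_eq_mul]

theorem fockOp_id_pow_single (c : ℕ → ℂ) (n b : ℕ) (x : ℂ) :
    (fockOp c id ^ n) (single b x) = single b (c b ^ n * x) := by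
  induction n with
  | zero => simp
  | succ n ih => rw [pow_succ', Module.End.mul_apply, ih, fockOp_single, id, pow_succ', mul_assoc]

theorem fockOp_succ_pow_single (c : ℕ → ℂ) (j b : ℕ) (x : ℂ) :
    (fockOp c (· + 1) ^ j) (single b x) = single (b + j) ((∏ i ∈ range j, c (b + i)) * x) := by
  induction j with
  | zero => simp
  | succ j ih =>
    rw [pow_succ', Module.End.mul_apply, ih, fockOp_single, prod_range_succ, ← add_assoc]
    ring_nf

theorem fockOp_sub_one_pow_single_add (c : ℕ → ℂ) (j n : ℕ) (x : ℂ) :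
    (fockOp c (· - 1) ^ j) (single (n + j) x) =
      single n ((∏ i ∈ range j, c (n + 1 + i)) * x) := by
  induction j generalizing x with
  | zero => simp
  | succ j ih =>
    rw [pow_succ, Module.End.mul_apply, fockOp_single, ← add_assoc, Nat.add_sub_cancel, ih,
      prod_range_succ, add_right_comm n 1 j]
    ring_nf

theorem fockOp_sub_one_pow_single_of_lt {c : ℕ → ℂ} (hc : c 0 = 0) {j b : ℕ} (hb : b < j)
    (x : ℂ) : (fockOp c (· - 1) ^ j) (single b x) = 0 := by
  obtain ⟨t, rfl⟩ : ∃ t, j = t + 1 + b := ⟨j - b - 1, by omega⟩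
  have h := fockOp_sub_one_pow_single_add c b 0 x
  rw [zero_add] at h
  rw [pow_add, pow_succ, Module.End.mul_apply, Module.End.mul_apply, h, fockOp_single, hc,
    zero_mul, Finsupp.single_zero, map_zero]

/-- `⟨ξ|v⟩`, with `⟨ξ| = ∑ ⟨a|/(q;q)_a` and `⟨a|a'⟩ = (q²;q²)_a δ_{a,a'}`. -/
noncomputable def braXi (q : ℂ) (v : ℕ →₀ ℂ) : ℂ :=
  v.sum fun a c => qPoch (q ^ 2) (q ^ 2) a / qPoch q q a * c

theorem braXi_single (q : ℂ) (a : ℕ) (c : ℂ) :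
    braXi q (single a c) = qPoch (q ^ 2) (q ^ 2) a / qPoch q q a * c :=
  Finsupp.sum_single_index (by simp)

variable {q : ℂ} (hq : ‖q‖ < 1) (z sq : ℂ) (j m : ℕ)
include hq

theorem braXi_raising_term (b : ℕ) :
    (qPoch q q b)⁻¹ * braXi q ((fockOp (fun a => z ^ a) id * fockOp (fun _ => 1) (· + 1) ^ j *
        fockOp (fun a => sq * q ^ a) id ^ m) (single b 1)) =
      sq ^ m * qPoch (-q) q j * z ^ j *
        (qPoch (-q * q ^ j) q b / qPoch q q b * (q ^ m * z) ^ b) := by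
  simp only [Module.End.mul_apply, fockOp_id_pow_single, fockOp_succ_pow_single, fockOp_single,
    id, braXi_single, prod_const_one, qPoch_sq_div_qPoch hq]
  rw [add_comm b j, qPoch_add]
  have := qPoch_ne_zero hq.le hq b
  field_simp
  ring

theorem braXi_lowering_term (n : ℕ) :
    (qPoch q q (n + j))⁻¹ * braXi q ((fockOp (fun a => z ^ a) id *
        fockOp (fun a => 1 - q ^ (2 * a)) (· - 1) ^ j * fockOp (fun a => sq * q ^ a) id ^ m)
        (single (n + j) 1)) =
      sq ^ m * qPoch (-q) q j * q ^ (m * j) *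
        (qPoch (-q * q ^ j) q n / qPoch q q n * (q ^ m * z) ^ n) := by
  simp only [Module.End.mul_apply, fockOp_id_pow_single, fockOp_sub_one_pow_single_add,
    fockOp_single, id, braXi_single, qPoch_sq_div_qPoch hq]
  have hprod : ∏ i ∈ range j, (1 - q ^ (2 * (n + 1 + i))) =
      qPoch (q * q ^ n) q j * qPoch (-(q * q ^ n)) q j := by
    rw [← qPoch_sq_sq, qPoch]
    exact prod_congr rfl fun i _ => by ring
  have hshift : qPoch (-q) q n * qPoch (-(q * q ^ n)) q j =
      qPoch (-q) q j * qPoch (-(q * q ^ j)) q n := by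
    rw [← neg_mul, ← neg_mul, ← qPoch_add, ← qPoch_add, add_comm]
  have hq' : ‖q * q ^ n‖ < 1 := by
    rw [← pow_succ', norm_pow]; exact pow_lt_one₀ (norm_nonneg q) hq (by omega)
  have := qPoch_ne_zero hq.le hq n
  have := qPoch_ne_zero hq.le hq' j
  rw [hprod, qPoch_add q q n j]
  field_simp
  linear_combination (z ^ n * sq ^ m * q ^ (n * m) * q ^ (j * m)) * hshift

variable {z} in
theorem tsum_braXi_raising (hz : ‖z‖ * ‖q‖ ^ m < 1) :
    ∑' b : ℕ, (qPoch q q b)⁻¹ * braXi q ((fockOp (fun a => z ^ a) id *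
        fockOp (fun _ => 1) (· + 1) ^ j * fockOp (fun a => sq * q ^ a) id ^ m) (single b 1)) =
      sq ^ m * qPoch (-q) q j * z ^ j *
        qPochInf (-(q ^ (j + m + 1)) * z) q / qPochInf (q ^ m * z) q := by
  have hw : ‖q ^ m * z‖ < 1 := by rwa [norm_mul, norm_pow, mul_comm]
  rw [tsum_congr (braXi_raising_term hq z sq j m), tsum_mul_left, ← qBinomialSeries,
    qBinomialSeries_eq_div_qPochInf _ hq hw,
    show -q * q ^ j * (q ^ m * z) = -(q ^ (j + m + 1)) * z by ring, mul_div_assoc]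

variable {z} in
theorem tsum_braXi_lowering (hz : ‖z‖ * ‖q‖ ^ m < 1) :
    ∑' b : ℕ, (qPoch q q b)⁻¹ * braXi q ((fockOp (fun a => z ^ a) id *
        fockOp (fun a => 1 - q ^ (2 * a)) (· - 1) ^ j * fockOp (fun a => sq * q ^ a) id ^ m)
        (single b 1)) =
      sq ^ m * qPoch (-q) q j * q ^ (m * j) *
        qPochInf (-(q ^ (j + m + 1)) * z) q / qPochInf (q ^ m * z) q := by
  have hw : ‖q ^ m * z‖ < 1 := by rwa [norm_mul, norm_pow, mul_comm]
  rw [← (add_left_injective j).tsum_eq, tsum_congr (braXi_lowering_term hq z sq j m),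
    tsum_mul_left, ← qBinomialSeries, qBinomialSeries_eq_div_qPochInf _ hq hw,
    show -q * q ^ j * (q ^ m * z) = -(q ^ (j + m + 1)) * z by ring, mul_div_assoc]
  -- `|b⟩` with `b < j` is annihilated by `(a⁻)^j`, so only `b = n + j` contributes
  refine fun b hb => ⟨b - j, Nat.sub_add_cancel (not_lt.mp fun hlt => hb ?_)⟩
  have hvanish := fockOp_sub_one_pow_single_of_lt (c := fun a => 1 - q ^ (2 * a)) (by simp) hlt
  simp only [Module.End.mul_apply, fockOp_id_pow_single, hvanish, map_zero, braXi,
    Finsupp.sum_zero_index, mul_zero]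

end FockSpace

theorem stmt_9_general (q sq z : ℂ) (hq : ‖q‖ < 1) (j m : ℕ)
    (hz : ‖z‖ * ‖q‖ ^ m < 1) :
    let aP := fockOp (fun _ => 1) (· + 1)
    let aM := fockOp (fun a => 1 - q ^ (2 * a)) (· - 1)
    let k := fockOp (fun a => sq * q ^ a) id
    let zh := fockOp (fun a => z ^ a) id
    let Brk : Module.End ℂ (ℕ →₀ ℂ) → ℂ := fun X =>
      ∑' b : ℕ, (qPoch q q b)⁻¹ *
        ((X (Finsupp.single b 1)).sum fun a c => qPoch (q ^ 2) (q ^ 2) a / qPoch q q a * c)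
    Brk (zh * aP ^ j * k ^ m) =
      sq ^ m * qPoch (-q) q j * z ^ j *
        qPochInf (-(q ^ (j + m + 1)) * z) q / qPochInf (q ^ m * z) q ∧
    Brk (zh * aM ^ j * k ^ m) =
      sq ^ m * qPoch (-q) q j * q ^ (m * j) *
        qPochInf (-(q ^ (j + m + 1)) * z) q / qPochInf (q ^ m * z) q :=
  ⟨tsum_braXi_raising hq sq j m hz, tsum_braXi_lowering hq sq j m hz⟩

/-- for the boundary vectors `|ξ⟩ = ∑_m |m⟩/(q;q)_m`,
`⟨ξ| = ∑_m ⟨m|/(q;q)_m` (with `⟨m|m'⟩ = (q²;q²)_m δ_{m,m'}`), `|q| < 1`,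
`|z| < |q|^{-m}` and `j, m ≥ 0`:
`⟨ξ| z^h (a⁺)^j k^m |ξ⟩ = q^{m/2} (-q;q)_j z^j (-q^{j+m+1}z;q)_∞ / (q^m z;q)_∞` and
`⟨ξ| z^h (a⁻)^j k^m |ξ⟩ = q^{m/2} (-q;q)_j q^{mj} (-q^{j+m+1}z;q)_∞ / (q^m z;q)_∞`. -/
theorem stmt_9 (q sq z : ℂ) (hsq : sq ^ 2 = q) (hq : ‖q‖ < 1) (j m : ℕ)
    (hz : ‖z‖ * ‖q‖ ^ m < 1) :
    let aP := fockOp (fun _ => 1) (· + 1)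
    let aM := fockOp (fun a => 1 - q ^ (2 * a)) (· - 1)
    let k := fockOp (fun a => sq * q ^ a) id
    let zh := fockOp (fun a => z ^ a) id
    let Brk : Module.End ℂ (ℕ →₀ ℂ) → ℂ := fun X =>
      ∑' b : ℕ, (qPoch q q b)⁻¹ *
        ((X (Finsupp.single b 1)).sum fun a c => qPoch (q ^ 2) (q ^ 2) a / qPoch q q a * c)
    Brk (zh * aP ^ j * k ^ m) =
      sq ^ m * qPoch (-q) q j * z ^ j *
        qPochInf (-(q ^ (j + m + 1)) * z) q / qPochInf (q ^ m * z) q ∧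
    Brk (zh * aM ^ j * k ^ m) =
      sq ^ m * qPoch (-q) q j * q ^ (m * j) *
        qPochInf (-(q ^ (j + m + 1)) * z) q / qPochInf (q ^ m * z) q :=
  stmt_9_general q sq z hq j m hz
end

section
/- The six-vertex R matrix R(z) ∈ End(C² ⊗ C²) defined by R(z)(v_i ⊗ v_i) = v_i ⊗ v_i for i ∈ {0,1}, R(z)(v₀⊗v₁) = (q^{3/2}(1-z)/(1+q³z)) v₀⊗v₁ + ((1+q³)z/(1+q³z)) v₁⊗v₀, R(z)(v₁⊗v₀) = ((1+q³)/(1+q³z)) v₀⊗v₁ - (q^{3/2}(1-z)/(1+q³z)) v₁⊗v₀, satisfies the Yang-Baxter equation R₁₂(x) R₁₃(xy) R₂₃(y) = R₂₃(y) R₁₃(xy) R₁₂(x). -/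
/-!
Write `R(z) = (1 + q³z)⁻¹ • N(z)` with `N(z)` polynomial in `z`. Each side of the Yang–Baxter
equation is linear in each of its three `R`-factors, so the scalar prefactors pull out and
the equation for `R` follows from the one for `N`. The latter is a finite check: with
`s = q^{3/2}`, all 64 matrix entries on both sides are polynomials in `s, x, y` (using only
`s² = q³`), and they agree.
-/

/-- Place a two-site operator `M` on tensor factors `a, b` of a triple tensor
product, acting as the identity on the remaining factor. -/
def emb2 {B : Type*} [DecidableEq B] (a b : Fin 3) (M : Matrix (B × B) (B × B) ℂ) :
    Matrix (Fin 3 → B) (Fin 3 → B) ℂ :=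
  Matrix.of fun c d => M (c a, c b) (d a, d b) *
    ∏ i : Fin 3, if i = a ∨ i = b then 1 else if c i = d i then 1 else 0

def IsYangBaxter {B : Type*} [Fintype B] [DecidableEq B]
    (R₁₂ R₁₃ R₂₃ : Matrix (B × B) (B × B) ℂ) : Prop :=
  emb2 0 1 R₁₂ * emb2 0 2 R₁₃ * emb2 1 2 R₂₃ = emb2 1 2 R₂₃ * emb2 0 2 R₁₃ * emb2 0 1 R₁₂

section emb2

variable {B : Type*} [DecidableEq B]

lemma emb2_smul (a b : Fin 3) (t : ℂ) (M : Matrix (B × B) (B × B) ℂ) :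
    emb2 a b (t • M) = t • emb2 a b M := by
  ext c d
  simp only [emb2, Matrix.smul_apply, Matrix.of_apply, smul_eq_mul, mul_assoc]

lemma emb2_zero_one_apply (M : Matrix (B × B) (B × B) ℂ) (c d : Fin 3 → B) :
    emb2 0 1 M c d = if c 2 = d 2 then M (c 0, c 1) (d 0, d 1) else 0 := by
  simp [emb2, Fin.prod_univ_three]

lemma emb2_zero_two_apply (M : Matrix (B × B) (B × B) ℂ) (c d : Fin 3 → B) :
    emb2 0 2 M c d = if c 1 = d 1 then M (c 0, c 2) (d 0, d 2) else 0 := by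
  simp [emb2, Fin.prod_univ_three]

lemma emb2_one_two_apply (M : Matrix (B × B) (B × B) ℂ) (c d : Fin 3 → B) :
    emb2 1 2 M c d = if c 0 = d 0 then M (c 1, c 2) (d 1, d 2) else 0 := by
  simp [emb2, Fin.prod_univ_three]

lemma IsYangBaxter.smul [Fintype B] {R₁₂ R₁₃ R₂₃ : Matrix (B × B) (B × B) ℂ}
    (h : IsYangBaxter R₁₂ R₁₃ R₂₃) (a b c : ℂ) :
    IsYangBaxter (a • R₁₂) (b • R₁₃) (c • R₂₃) := by
  unfold IsYangBaxter at h ⊢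
  simp only [emb2_smul, smul_mul_smul_comm, h]
  congr 1
  ring

end emb2

lemma sum_fin_three_fin_two (f : (Fin 3 → Fin 2) → ℂ) :
    ∑ g, f g = f ![0,0,0] + f ![0,0,1] + f ![0,1,0] + f ![0,1,1]
      + f ![1,0,0] + f ![1,0,1] + f ![1,1,0] + f ![1,1,1] := by
  have huniv : (Finset.univ : Finset (Fin 3 → Fin 2))
      = {![0,0,0], ![0,0,1], ![0,1,0], ![0,1,1], ![1,0,0], ![1,0,1], ![1,1,0], ![1,1,1]} := by
    decide
  rw [huniv]
  simp +decide [Finset.sum_insert, add_assoc]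

/-- `R(z)` of the theorem, with `s` standing for `q^{3/2}`. -/
noncomputable def sixVertexR (q s z : ℂ) : Matrix (Fin 2 × Fin 2) (Fin 2 × Fin 2) ℂ :=
  Matrix.of fun o i =>
    if i = o ∧ i.1 = i.2 then 1
    else if i = ((0 : Fin 2), (1 : Fin 2)) then
      (if o = i then s * (1 - z) / (1 + q ^ 3 * z)
       else if o = ((1 : Fin 2), (0 : Fin 2)) then (1 + q ^ 3) * z / (1 + q ^ 3 * z)
       else 0)
    else if i = ((1 : Fin 2), (0 : Fin 2)) then
      (if o = ((0 : Fin 2), (1 : Fin 2)) then (1 + q ^ 3) / (1 + q ^ 3 * z)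
       else if o = i then -(s * (1 - z) / (1 + q ^ 3 * z))
       else 0)
    else 0

/-- The numerator `N(z)`, with `t` standing for `q³`. -/
def sixVertexRNumerator (t s z : ℂ) : Matrix (Fin 2 × Fin 2) (Fin 2 × Fin 2) ℂ :=
  Matrix.of fun o i =>
    if i = o ∧ i.1 = i.2 then 1 + t * z
    else if i = ((0 : Fin 2), (1 : Fin 2)) then
      (if o = i then s * (1 - z)
       else if o = ((1 : Fin 2), (0 : Fin 2)) then (1 + t) * z
       else 0)
    else if i = ((1 : Fin 2), (0 : Fin 2)) then
      (if o = ((0 : Fin 2), (1 : Fin 2)) then 1 + t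
       else if o = i then -(s * (1 - z))
       else 0)
    else 0

lemma sixVertexR_eq_smul {q z : ℂ} (s : ℂ) (hz : 1 + q ^ 3 * z ≠ 0) :
    sixVertexR q s z = (1 + q ^ 3 * z)⁻¹ • sixVertexRNumerator (q ^ 3) s z := by
  ext o i
  simp only [sixVertexR, sixVertexRNumerator, Matrix.smul_apply, Matrix.of_apply, smul_eq_mul]
  split_ifs <;> field_simp <;> ring

set_option maxHeartbeats 400000 in
lemma sixVertexRNumerator_isYangBaxter {s t : ℂ} (hs : s ^ 2 = t) (x y : ℂ) :
    IsYangBaxter (sixVertexRNumerator t s x) (sixVertexRNumerator t s (x * y))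
      (sixVertexRNumerator t s y) := by
  subst hs
  unfold IsYangBaxter
  ext c d
  fin_cases c <;> fin_cases d <;>
    simp +decide only [Matrix.mul_apply, sum_fin_three_fin_two,
      emb2_zero_one_apply, emb2_zero_two_apply, emb2_one_two_apply, Matrix.cons_val_zero,
      Matrix.cons_val_one, Matrix.cons_val_two, Matrix.head_cons, Matrix.tail_cons,
      sixVertexRNumerator, Matrix.of_apply, Prod.mk.injEq, Fin.isValue, ite_true, ite_false,
      and_true, and_false, mul_zero, zero_mul, add_zero, zero_add] <;>
    ring

/-- the six-vertex `R` matrix (the `n = 1` boundary-vector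
reduced `R^{bv}(z)`), given by `R(z)(vᵢ⊗vᵢ) = vᵢ⊗vᵢ`,
`R(z)(v₀⊗v₁) = (q^{3/2}(1-z)/(1+q³z)) v₀⊗v₁ + ((1+q³)z/(1+q³z)) v₁⊗v₀`,
`R(z)(v₁⊗v₀) = ((1+q³)/(1+q³z)) v₀⊗v₁ - (q^{3/2}(1-z)/(1+q³z)) v₁⊗v₀`
(with `sq` a fixed square root of `q`, so `q^{3/2} = sq³`), satisfies the
Yang-Baxter equation `R₁₂(x) R₁₃(xy) R₂₃(y) = R₂₃(y) R₁₃(xy) R₁₂(x)`. -/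
theorem stmt_11 (q sq x y : ℂ) (hsq : sq ^ 2 = q)
    (h1 : 1 + q ^ 3 * x ≠ 0) (h2 : 1 + q ^ 3 * (x * y) ≠ 0) (h3 : 1 + q ^ 3 * y ≠ 0) :
    let R : ℂ → Matrix (Fin 2 × Fin 2) (Fin 2 × Fin 2) ℂ := fun z =>
      Matrix.of fun o i =>
        if i = o ∧ i.1 = i.2 then 1
        else if i = ((0 : Fin 2), (1 : Fin 2)) then
          (if o = i then sq ^ 3 * (1 - z) / (1 + q ^ 3 * z)
           else if o = ((1 : Fin 2), (0 : Fin 2)) then (1 + q ^ 3) * z / (1 + q ^ 3 * z)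
           else 0)
        else if i = ((1 : Fin 2), (0 : Fin 2)) then
          (if o = ((0 : Fin 2), (1 : Fin 2)) then (1 + q ^ 3) / (1 + q ^ 3 * z)
           else if o = i then -(sq ^ 3 * (1 - z) / (1 + q ^ 3 * z))
           else 0)
        else 0
    emb2 0 1 (R x) * emb2 0 2 (R (x * y)) * emb2 1 2 (R y) =
      emb2 1 2 (R y) * emb2 0 2 (R (x * y)) * emb2 0 1 (R x) := by
  intro R
  show IsYangBaxter (sixVertexR q (sq ^ 3) x) (sixVertexR q (sq ^ 3) (x * y))
    (sixVertexR q (sq ^ 3) y)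
  have hs : (sq ^ 3) ^ 2 = q ^ 3 := by rw [← hsq]; ring
  rw [sixVertexR_eq_smul _ h1, sixVertexR_eq_smul _ h2, sixVertexR_eq_smul _ h3]
  exact (sixVertexRNumerator_isYangBaxter hs x y).smul _ _ _
end
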